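/- Let S and M = LᵀL be p × p positive semidefinite matrices with smallest eigenvalues λ₁(S) and λ₁(M). If μ ≤ λ₁(S)·λ₁(M), then the function f(P) = (1/2)·tr(L P S Pᵀ Lᵀ) − (μ/2)·‖P‖_F² is convex on the space of p × p real matrices P. -/

import Mathlib

/-!
The penalized score is the diagonal `P ↦ B P P` of a bilinear form `B`, and such a diagonal is
convex as soon as it is nonnegative: for `a + b = 1`,
`a B(x,x) + b B(y,y) - B(ax + by, ax + by) = ab B(x - y, x - y)`.
Nonnegativity is `μ ‖P‖_F² ≤ tr(L P S Pᵀ Lᵀ)`, obtained by applying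
`λ₁(A) tr(X Xᵀ) ≤ tr(X A Xᵀ)` twice: with `X = L P`, `A = S`, then with `X = Pᵀ`, `A = Lᵀ L`.
-/

open Matrix
open scoped ComplexOrder MatrixOrder

theorem LinearMap.BilinForm.convexOn_univ_of_nonneg {E : Type*} [AddCommGroup E] [Module ℝ E]
    (B : LinearMap.BilinForm ℝ E) (hB : ∀ x, 0 ≤ B x x) :
    ConvexOn ℝ Set.univ fun x => B x x := by
  refine ⟨convex_univ, fun x _ y _ a b ha hb hab => ?_⟩
  have gap : a • B x x + b • B y y - B (a • x + b • y) (a • x + b • y) =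
      a * b * B (x - y) (x - y) := by
    simp only [map_add, map_smul, map_sub, LinearMap.add_apply, LinearMap.smul_apply,
      LinearMap.sub_apply, smul_eq_mul]
    linear_combination -(a * B x x + b * B y y) * hab
  linarith [mul_nonneg (mul_nonneg ha hb) (hB (x - y))]

namespace Matrix

theorem IsHermitian.posSemidef_sub_smul_one {n 𝕜 : Type*} [Fintype n] [DecidableEq n] [RCLike 𝕜]
    {A : Matrix n n 𝕜} (hA : A.IsHermitian) {c : ℝ} (hc : ∀ i, c ≤ hA.eigenvalues i) :
    (A - c • (1 : Matrix n n 𝕜)).PosSemidef := by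
  have : algebraMap ℝ (Matrix n n 𝕜) c ≤ A := by
    rw [algebraMap_le_iff_le_spectrum hA.isSelfAdjoint, hA.spectrum_real_eq_range_eigenvalues]
    rintro _ ⟨i, rfl⟩
    exact hc i
  rwa [Algebra.algebraMap_eq_smul_one] at this

theorem IsHermitian.iInf_eigenvalues_mul_trace_le {m n : Type*} [Fintype m] [Fintype n]
    [DecidableEq n] {A : Matrix n n ℝ} (hA : A.IsHermitian) (X : Matrix m n ℝ) :
    (⨅ i, hA.eigenvalues i) * (X * Xᵀ).trace ≤ (X * A * Xᵀ).trace := by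
  have hc := hA.posSemidef_sub_smul_one fun i =>
    ciInf_le (Set.finite_range hA.eigenvalues).bddBelow i
  have := (hc.mul_mul_conjTranspose_same X).trace_nonneg
  rw [conjTranspose_eq_transpose_of_trivial] at this
  rwa [Matrix.mul_sub, Matrix.sub_mul, trace_sub, Matrix.mul_smul, Matrix.smul_mul,
    Matrix.mul_one, trace_smul, smul_eq_mul, sub_nonneg] at this

theorem sum_sum_sq_eq_trace_mul_transpose {m n : Type*} [Fintype m] [Fintype n]
    (P : Matrix m n ℝ) :
    ∑ i, ∑ j, P i j ^ 2 = (P * Pᵀ).trace := by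
  simp [trace, mul_apply, sq]

end Matrix

section PenalizedScore

variable {n : Type*} [Fintype n]

theorem mul_sum_sum_sq_le_trace [DecidableEq n] {S L : Matrix n n ℝ} (hS : S.PosSemidef)
    (hM : (Lᵀ * L).PosSemidef) {μ : ℝ}
    (hμ : μ ≤ (⨅ i, hS.1.eigenvalues i) * (⨅ i, hM.1.eigenvalues i)) (P : Matrix n n ℝ) :
    μ * ∑ i, ∑ j, P i j ^ 2 ≤ (L * P * S * Pᵀ * Lᵀ).trace := by
  set lS := ⨅ i, hS.1.eigenvalues i
  set lM := ⨅ i, hM.1.eigenvalues i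
  have hlS : 0 ≤ lS := Real.iInf_nonneg hS.eigenvalues_nonneg
  have hP : 0 ≤ ∑ i, ∑ j, P i j ^ 2 := by positivity
  have hPL : lM * ∑ i, ∑ j, P i j ^ 2 ≤ (Pᵀ * (Lᵀ * L) * P).trace := by
    rw [sum_sum_sq_eq_trace_mul_transpose, trace_mul_comm]
    simpa using hM.1.iInf_eigenvalues_mul_trace_le Pᵀ
  calc μ * ∑ i, ∑ j, P i j ^ 2
      ≤ lS * (lM * ∑ i, ∑ j, P i j ^ 2) := by
        rw [← mul_assoc]; exact mul_le_mul_of_nonneg_right hμ hP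
    _ ≤ lS * (Pᵀ * (Lᵀ * L) * P).trace := mul_le_mul_of_nonneg_left hPL hlS
    _ = lS * ((L * P) * (L * P)ᵀ).trace := by
        rw [transpose_mul, ← Matrix.mul_assoc Pᵀ, Matrix.mul_assoc (Pᵀ * Lᵀ), trace_mul_comm]
    _ ≤ ((L * P) * S * (L * P)ᵀ).trace := hS.1.iInf_eigenvalues_mul_trace_le (L * P)
    _ = (L * P * S * Pᵀ * Lᵀ).trace := by rw [transpose_mul, Matrix.mul_assoc _ Pᵀ]

noncomputable def penalizedScoreForm (L S : Matrix n n ℝ) (μ : ℝ) :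
    LinearMap.BilinForm ℝ (Matrix n n ℝ) :=
  LinearMap.mk₂ ℝ (fun P Q => (1 / 2) * (L * P * S * Qᵀ * Lᵀ).trace - (μ / 2) * (P * Qᵀ).trace)
    (fun P P' Q => by simp only [Matrix.mul_add, Matrix.add_mul, trace_add]; ring)
    (fun c P Q => by simp only [Matrix.mul_smul, Matrix.smul_mul, trace_smul, smul_eq_mul]; ring)
    (fun P Q Q' => by simp only [transpose_add, Matrix.mul_add, Matrix.add_mul, trace_add]; ring)
    (fun c P Q => by
      simp only [transpose_smul, Matrix.mul_smul, Matrix.smul_mul, trace_smul, smul_eq_mul]; ring)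

end PenalizedScore

theorem convexity_of_penalized_score {p : ℕ}
    (S L : Matrix (Fin p) (Fin p) ℝ) (hS : S.PosSemidef)
    (hM : (Lᵀ * L).PosSemidef) (μ : ℝ)
    (hμ : μ ≤ (⨅ i, hS.1.eigenvalues i) * (⨅ i, hM.1.eigenvalues i)) :
    ConvexOn ℝ Set.univ
      (fun P : Matrix (Fin p) (Fin p) ℝ =>
        (1 / 2) * (L * P * S * Pᵀ * Lᵀ).trace -
          (μ / 2) * ∑ i, ∑ j, (P i j) ^ 2) := by
  have hdiag (P) : penalizedScoreForm L S μ P P =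
      (1 / 2) * (L * P * S * Pᵀ * Lᵀ).trace - (μ / 2) * ∑ i, ∑ j, (P i j) ^ 2 := by
    rw [sum_sum_sq_eq_trace_mul_transpose]; rfl
  have hnonneg (P) : 0 ≤ penalizedScoreForm L S μ P P := by
    rw [hdiag]; linarith [mul_sum_sum_sq_le_trace hS hM hμ P]
  simpa only [hdiag] using (penalizedScoreForm L S μ).convexOn_univ_of_nonneg hnonneg
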